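/- arXiv:1903.10402 — 3 statements merged into one kernel-verified Lean document; each statement's English description precedes it below -/
import Mathlib

section
/- Progress for the asymmetric algorithm: in every fair execution of the asymmetric algorithm, every process that is waiting in state 2 (having set flag[i]:=WAITING) eventually enters the critical section. -/
/-!
Model of the asymmetric mutual-exclusion algorithm with a coordinator.

Shared variables:
* `turn : Option (Fin N)` where `none` stands for THINKING,
* `flag : Fin N → Flag` with values REMAINDER / WAITING.

Process `i` automaton: state 1 --(flag[i]:=WAITING)--> state 2
--(turn = i ⇒)--> critical section --(flag[i]:=REMAINDER)--> state 3
--(turn := THINKING)--> state 4.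

Coordinator automaton (local counter `p`, initially set to 0):
state 1 --(p:=0)--> state 2; state 2 --(flag[p]≠WAITING ⇒)--> state 3;
state 2 --(flag[p]=WAITING ⇒)--> state 2.1 --(turn:=p)--> state 2.2
--(turn=THINKING ⇒)--> state 3; state 3 --(p:=(p+1) mod N)--> state 2.
-/

namespace Asym

inductive Flag
  | remainder | waiting
  deriving DecidableEq

/-- Program counter of a process. -/
inductive PPC
  | s1 | s2 | cs | s3 | s4
  deriving DecidableEq

/-- Program counter of the coordinator. -/
inductive CPC
  | c1 | c2 | c21 | c22 | c3
  deriving DecidableEq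

/-- A global state. -/
structure St (N : ℕ) where
  /-- `none` encodes THINKING. -/
  turn : Option (Fin N)
  flag : Fin N → Flag
  pc : Fin N → PPC
  cpc : CPC
  p : Fin N

/-- The initial global state. -/
def initSt (N : ℕ) [NeZero N] : St N where
  turn := none
  flag := fun _ => .remainder
  pc := fun _ => .s1
  cpc := .c1
  p := 0

/-- Who takes a step: a process or the coordinator. -/
inductive Label (N : ℕ)
  | proc : Fin N → Label N
  | coord

/-- One enabled transition of a single agent. -/
inductive Step {N : ℕ} [NeZero N] : Label N → St N → St N → Prop
  | p12 (s : St N) (i : Fin N) (h : s.pc i = .s1) :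
      Step (.proc i) s { s with flag := Function.update s.flag i .waiting,
                                pc := Function.update s.pc i .s2 }
  | p2cs (s : St N) (i : Fin N) (h : s.pc i = .s2) (ht : s.turn = some i) :
      Step (.proc i) s { s with pc := Function.update s.pc i .cs }
  | pcs3 (s : St N) (i : Fin N) (h : s.pc i = .cs) :
      Step (.proc i) s { s with flag := Function.update s.flag i .remainder,
                                pc := Function.update s.pc i .s3 }
  | p34 (s : St N) (i : Fin N) (h : s.pc i = .s3) :
      Step (.proc i) s { s with turn := none,
                                pc := Function.update s.pc i .s4 }
  | c12 (s : St N) (h : s.cpc = .c1) :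
      Step .coord s { s with p := 0, cpc := .c2 }
  | c23 (s : St N) (h : s.cpc = .c2) (hf : s.flag s.p ≠ .waiting) :
      Step .coord s { s with cpc := .c3 }
  | c2_21 (s : St N) (h : s.cpc = .c2) (hf : s.flag s.p = .waiting) :
      Step .coord s { s with cpc := .c21 }
  | c21_22 (s : St N) (h : s.cpc = .c21) :
      Step .coord s { s with turn := some s.p, cpc := .c22 }
  | c22_3 (s : St N) (h : s.cpc = .c22) (ht : s.turn = none) :
      Step .coord s { s with cpc := .c3 }
  | c3_2 (s : St N) (h : s.cpc = .c3) :
      Step .coord s { s with p := s.p + 1, cpc := .c2 }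

/-- An execution: a sequence of global states starting from the initial
state, together with a schedule; at each instant either exactly one agent
takes one of its enabled transitions, or (if `none` is scheduled) the
state stutters. -/
structure Exec (N : ℕ) [NeZero N] where
  states : ℕ → St N
  sched : ℕ → Option (Label N)
  init : states 0 = initSt N
  step : ∀ n, match sched n with
    | some l => Step l (states n) (states (n + 1))
    | none => states (n + 1) = states n

/-- An agent is enabled if it can take a transition. -/
def Enabled {N : ℕ} [NeZero N] (l : Label N) (s : St N) : Prop :=
  ∃ s', Step l s s'

/-- Weak fairness: an agent whose next transition is continuously enabled
eventually takes it. -/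
def Exec.Fair {N : ℕ} [NeZero N] (e : Exec N) : Prop :=
  ∀ l n, (∀ m, n ≤ m → Enabled l (e.states m)) → ∃ m, n ≤ m ∧ e.sched m = some l

/-- A state is reachable if it occurs in some execution. -/
def Reachable {N : ℕ} [NeZero N] (s : St N) : Prop :=
  ∃ e : Exec N, ∃ n, e.states n = s

end Asym

/-!
Every reachable state satisfies a small inductive invariant; in particular `turn = some j`
holds only while the coordinator waits in state 2.2 with counter `j` and process `j` is between
state 2 and state 3. So the turn holder keeps the turn until it releases it, and weak fairness
makes it do so; the coordinator is therefore never blocked for good and, again by fairness,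
runs through all counter values. A process `i` waiting in state 2 stays there until it enters
the critical section; once the coordinator reaches counter `i` it sees `flag[i] = WAITING` and
hands `i` the turn, after which fairness lets `i` enter. Each progress step is an instance of
the weak-fairness rule WF1.
-/

def LeadsTo {α : Type*} (σ : ℕ → α) (P Q : α → Prop) : Prop :=
  ∀ n, P (σ n) → ∃ m, n ≤ m ∧ Q (σ m)

namespace LeadsTo

variable {α : Type*} {σ : ℕ → α} {P Q R : α → Prop}

theorem of_imp (h : ∀ n, P (σ n) → Q (σ n)) : LeadsTo σ P Q :=
  fun n hn => ⟨n, le_rfl, h n hn⟩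

theorem trans (h₁ : LeadsTo σ P Q) (h₂ : LeadsTo σ Q R) : LeadsTo σ P R := fun n hn =>
  let ⟨m, hnm, hm⟩ := h₁ n hn
  let ⟨k, hmk, hk⟩ := h₂ m hm
  ⟨k, hnm.trans hmk, hk⟩

theorem or (h₁ : LeadsTo σ P R) (h₂ : LeadsTo σ Q R) : LeadsTo σ (fun a => P a ∨ Q a) R :=
  fun n hn => hn.elim (h₁ n) (h₂ n)

end LeadsTo

theorem exists_or_forall_of_unless {α : Type*} {σ : ℕ → α} {P Q : α → Prop}
    (h : ∀ m, P (σ m) → P (σ (m + 1)) ∨ Q (σ (m + 1))) (n : ℕ) (hn : P (σ n)) :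
    (∃ m, n ≤ m ∧ Q (σ m)) ∨ ∀ m, n ≤ m → P (σ m) := by
  refine or_iff_not_imp_left.2 fun hQ m hnm => ?_
  induction m, hnm using Nat.le_induction with
  | base => exact hn
  | succ m hnm ih => exact (h m ih).resolve_right fun hm => hQ ⟨m + 1, by omega, hm⟩

namespace Asym

variable {N : ℕ} [NeZero N] {l : Label N} {s s' : St N} {i j : Fin N}

theorem Step.pc_eq (h : Step l s s') (hl : l ≠ .proc j) : s'.pc j = s.pc j := by
  cases h <;> grind [Function.update_apply]

theorem Step.cpc_eq (h : Step (.proc j) s s') : s'.cpc = s.cpc := by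
  cases h <;> rfl

theorem Step.p_eq (h : Step (.proc j) s s') : s'.p = s.p := by
  cases h <;> rfl

theorem Step.turn_of_proc (h : Step (.proc j) s s') :
    s'.turn = s.turn ∨ (s.pc j = .s3 ∧ s'.turn = none) := by
  cases h <;> simp_all

theorem Step.turn_eq_of_coord (h : Step .coord s s') (hc : s.cpc ≠ .c21) : s'.turn = s.turn := by
  cases h <;> simp_all

theorem Step.pc_of_pc_eq_s2 (h : Step l s s') (hi : s.pc i = .s2) :
    s'.pc i = .s2 ∨ (s'.pc i = .cs ∧ s.turn = some i) := by
  cases h <;> grind [Function.update_apply]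

structure Inv (s : St N) : Prop where
  flag_eq_waiting_iff : ∀ j, s.flag j = .waiting ↔ s.pc j = .s2 ∨ s.pc j = .cs
  turn_eq_of_pc : ∀ j, s.pc j = .cs ∨ s.pc j = .s3 → s.turn = some j
  cpc_p_of_turn : ∀ j, s.turn = some j → s.cpc = .c22 ∧ s.p = j
  pc_of_turn : ∀ j, s.turn = some j → s.pc j = .s2 ∨ s.pc j = .cs ∨ s.pc j = .s3
  flag_p_of_cpc : s.cpc = .c21 → s.flag s.p = .waiting

theorem inv_initSt : Inv (initSt N) := by
  constructor <;> simp [initSt]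

theorem Inv.step (hs : Inv s) (h : Step l s s') : Inv s' := by
  obtain ⟨h1, h2, h3, h4, h5⟩ := hs
  cases h <;> constructor <;> simp only [Function.update_apply] <;> grind

theorem Inv.turn_pc_of_step (hs : Inv s) (ht : s.turn = some j) (h : Step l s s')
    (hl : l ≠ .proc j) : s'.turn = some j ∧ s'.pc j = s.pc j := by
  refine ⟨?_, h.pc_eq hl⟩
  rw [← ht]
  cases l with
  | proc k =>
    refine h.turn_of_proc.resolve_right fun ⟨hk, _⟩ => hl ?_
    have := hs.turn_eq_of_pc k (.inr hk)
    simp_all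
  | coord => exact h.turn_eq_of_coord (by simp [(hs.cpc_p_of_turn j ht).1])

theorem Inv.pc_eq_s2_of_step (hs : Inv s) (hc : s.cpc ≠ .c22) (hi : s.pc i = .s2)
    (h : Step l s s') : s'.pc i = .s2 :=
  (h.pc_of_pc_eq_s2 hi).resolve_right fun ⟨_, ht⟩ => hc (hs.cpc_p_of_turn i ht).1

namespace Exec

variable (e : Exec N) {P Q : St N → Prop}

theorem step_of_sched {m : ℕ} (h : e.sched m = some l) :
    Step l (e.states m) (e.states (m + 1)) := by
  simpa [h] using e.step m

theorem states_succ_eq_or_step (m : ℕ) : e.states (m + 1) = e.states m ∨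
    ∃ l, e.sched m = some l ∧ Step l (e.states m) (e.states (m + 1)) := by
  cases h : e.sched m with
  | none => simpa [h] using e.step m
  | some l => exact .inr ⟨l, rfl, e.step_of_sched h⟩

theorem inv (m : ℕ) : Inv (e.states m) := by
  induction m with
  | zero => rw [e.init]; exact inv_initSt
  | succ m ih =>
    rcases e.states_succ_eq_or_step m with h | ⟨l, -, h⟩
    · exact h ▸ ih
    · exact ih.step h

theorem exists_or_forall_of_unless
    (h : ∀ l s s', Inv s → P s → Step l s s' → P s' ∨ Q s') (n : ℕ) (hn : P (e.states n)) :
    (∃ m, n ≤ m ∧ Q (e.states m)) ∨ ∀ m, n ≤ m → P (e.states m) := by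
  refine _root_.exists_or_forall_of_unless (fun m hm => ?_) n hn
  rcases e.states_succ_eq_or_step m with hs | ⟨l, -, hs⟩
  · exact .inl (hs ▸ hm)
  · exact h l _ _ (e.inv m) hm hs

/-- The weak-fairness rule WF1 of temporal logic. -/
theorem leadsTo_of_fair (hfair : e.Fair) (l : Label N)
    (hstable : ∀ l' s s', l' ≠ l → Inv s → P s → Step l' s s' → P s' ∨ Q s')
    (henabled : ∀ s, Inv s → P s → Enabled l s)
    (hprogress : ∀ s s', Inv s → P s → Step l s s' → Q s') :
    LeadsTo e.states P Q := by
  intro n hn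
  have hunless (l' s s') (hs : Inv s) (hP : P s) (h : Step l' s s') : P s' ∨ Q s' := by
    by_cases hl : l' = l
    · subst hl
      exact .inr (hprogress s s' hs hP h)
    · exact hstable l' s s' hl hs hP h
  refine (e.exists_or_forall_of_unless hunless n hn).elim id fun hP => ?_
  obtain ⟨m, hnm, hm⟩ := hfair l n fun m hnm => henabled _ (e.inv m) (hP m hnm)
  exact ⟨m + 1, by omega, hprogress _ _ (e.inv m) (hP m hnm) (e.step_of_sched hm)⟩

theorem leadsTo_of_fair_coord (hfair : e.Fair)
    (hstable : ∀ j s s', Inv s → P s → Step (.proc j) s s' → P s')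
    (henabled : ∀ s, Inv s → P s → Enabled .coord s)
    (hprogress : ∀ s s', Inv s → P s → Step .coord s s' → Q s') :
    LeadsTo e.states P Q := by
  refine e.leadsTo_of_fair hfair .coord (fun l s s' hl hs hP h => ?_) henabled hprogress
  cases l with
  | proc j => exact .inl (hstable j s s' hs hP h)
  | coord => exact absurd rfl hl

theorem leadsTo_of_fair_turn_holder (hfair : e.Fair) (x : PPC)
    (henabled : ∀ s, Inv s → s.turn = some j → s.pc j = x → Enabled (.proc j) s)
    (hprogress : ∀ s s', Inv s → s.turn = some j → s.pc j = x → Step (.proc j) s s' → Q s') :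
    LeadsTo e.states (fun s => s.turn = some j ∧ s.pc j = x) Q :=
  e.leadsTo_of_fair hfair (.proc j)
    (fun _ _ _ hl hs hP h => .inl <| hP.2 ▸ hs.turn_pc_of_step hP.1 h hl)
    (fun s hs hP => henabled s hs hP.1 hP.2) fun s s' hs hP => hprogress s s' hs hP.1 hP.2

theorem leadsTo_cs_of_turn (hfair : e.Fair) :
    LeadsTo e.states (fun s => s.turn = some j ∧ s.pc j = .s2)
      (fun s => s.turn = some j ∧ s.pc j = .cs) :=
  e.leadsTo_of_fair_turn_holder hfair .s2 (fun s _ ht hpc => ⟨_, .p2cs s j hpc ht⟩)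
    fun _ _ _ ht hpc h => by cases h <;> simp_all

theorem leadsTo_s3_of_turn (hfair : e.Fair) :
    LeadsTo e.states (fun s => s.turn = some j ∧ s.pc j = .cs)
      (fun s => s.turn = some j ∧ s.pc j = .s3) :=
  e.leadsTo_of_fair_turn_holder hfair .cs (fun s _ _ hpc => ⟨_, .pcs3 s j hpc⟩)
    fun _ _ _ ht hpc h => by cases h <;> simp_all

theorem leadsTo_turn_eq_none_of_s3 (hfair : e.Fair) :
    LeadsTo e.states (fun s => s.turn = some j ∧ s.pc j = .s3)
      (fun s => s.cpc = .c22 ∧ s.p = j ∧ s.turn = none) :=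
  e.leadsTo_of_fair_turn_holder hfair .s3 (fun s _ _ hpc => ⟨_, .p34 s j hpc⟩)
    fun _ _ hs ht hpc h => by have := hs.cpc_p_of_turn j ht; cases h <;> simp_all

theorem leadsTo_turn_eq_none (hfair : e.Fair) :
    LeadsTo e.states (fun s => s.turn = some j)
      (fun s => s.cpc = .c22 ∧ s.p = j ∧ s.turn = none) := by
  have hs3 := e.leadsTo_turn_eq_none_of_s3 (j := j) hfair
  have hcs := (e.leadsTo_s3_of_turn hfair).trans hs3
  refine (LeadsTo.of_imp fun n ht => ?_).trans
    (((e.leadsTo_cs_of_turn hfair).trans hcs).or (hcs.or hs3))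
  have := (e.inv n).pc_of_turn j ht
  tauto

theorem leadsTo_c2_of_c1 (hfair : e.Fair) :
    LeadsTo e.states (fun s => s.cpc = .c1) (fun s => s.cpc = .c2) :=
  e.leadsTo_of_fair_coord hfair (fun _ _ _ _ hP h => h.cpc_eq.trans hP)
    (fun s _ hP => ⟨_, .c12 s hP⟩) fun _ _ _ hP h => by cases h <;> simp_all

theorem leadsTo_c3_or_c21_of_c2 (hfair : e.Fair) (q : Fin N) :
    LeadsTo e.states (fun s => s.cpc = .c2 ∧ s.p = q)
      (fun s => (s.cpc = .c3 ∧ s.p = q) ∨ (s.cpc = .c21 ∧ s.p = q)) := by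
  refine e.leadsTo_of_fair_coord hfair (fun _ _ _ _ hP h => by rwa [h.cpc_eq, h.p_eq])
    (fun s _ hP => ?_) fun _ _ _ hP h => by cases h <;> simp_all
  by_cases hf : s.flag s.p = .waiting
  exacts [⟨_, .c2_21 s hP.1 hf⟩, ⟨_, .c23 s hP.1 hf⟩]

theorem leadsTo_c22_of_c21 (hfair : e.Fair) (q : Fin N) :
    LeadsTo e.states (fun s => s.cpc = .c21 ∧ s.p = q) (fun s => s.cpc = .c22 ∧ s.p = q) :=
  e.leadsTo_of_fair_coord hfair (fun _ _ _ _ hP h => by rwa [h.cpc_eq, h.p_eq])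
    (fun s _ hP => ⟨_, .c21_22 s hP.1⟩) fun _ _ _ hP h => by cases h <;> simp_all

theorem leadsTo_c3_of_c22 (hfair : e.Fair) (q : Fin N) :
    LeadsTo e.states (fun s => s.cpc = .c22 ∧ s.p = q) (fun s => s.cpc = .c3 ∧ s.p = q) := by
  have hfree : LeadsTo e.states (fun s => s.cpc = .c22 ∧ s.p = q)
      (fun s => s.cpc = .c22 ∧ s.p = q ∧ s.turn = none) := by
    intro n ⟨hc, hp⟩
    cases ht : (e.states n).turn with
    | none => exact ⟨n, le_rfl, hc, hp, ht⟩
    | some j =>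
      obtain rfl : j = q := ((e.inv n).cpc_p_of_turn j ht).2.symm.trans hp
      exact e.leadsTo_turn_eq_none hfair n ht
  refine hfree.trans <| e.leadsTo_of_fair_coord hfair (fun _ _ _ _ hP h => ?_)
    (fun s _ hP => ⟨_, .c22_3 s hP.1 hP.2.2⟩) fun _ _ _ hP h => by cases h <;> simp_all
  rw [h.cpc_eq, h.p_eq]
  exact ⟨hP.1, hP.2.1, h.turn_of_proc.elim (·.trans hP.2.2) And.right⟩

theorem leadsTo_c2_of_c3 (hfair : e.Fair) (q : Fin N) :
    LeadsTo e.states (fun s => s.cpc = .c3 ∧ s.p = q) (fun s => s.cpc = .c2 ∧ s.p = q + 1) :=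
  e.leadsTo_of_fair_coord hfair (fun _ _ _ _ hP h => by rwa [h.cpc_eq, h.p_eq])
    (fun s _ hP => ⟨_, .c3_2 s hP.1⟩) fun _ _ _ hP h => by cases h <;> simp_all

theorem leadsTo_c2_of_c21 (hfair : e.Fair) (q : Fin N) :
    LeadsTo e.states (fun s => s.cpc = .c21 ∧ s.p = q) (fun s => s.cpc = .c2 ∧ s.p = q + 1) :=
  (e.leadsTo_c22_of_c21 hfair q).trans <|
    (e.leadsTo_c3_of_c22 hfair q).trans (e.leadsTo_c2_of_c3 hfair q)

theorem leadsTo_c2_succ (hfair : e.Fair) (q : Fin N) :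
    LeadsTo e.states (fun s => s.cpc = .c2 ∧ s.p = q) (fun s => s.cpc = .c2 ∧ s.p = q + 1) :=
  (e.leadsTo_c3_or_c21_of_c2 hfair q).trans <|
    (e.leadsTo_c2_of_c3 hfair q).or (e.leadsTo_c2_of_c21 hfair q)

theorem leadsTo_c2 (hfair : e.Fair) : LeadsTo e.states (fun _ => True) (fun s => s.cpc = .c2) := by
  intro n _
  cases hc : (e.states n).cpc with
  | c1 => exact e.leadsTo_c2_of_c1 hfair n hc
  | c2 => exact ⟨n, le_rfl, hc⟩
  | c21 => exact (e.leadsTo_c2_of_c21 hfair _ n ⟨hc, rfl⟩).imp fun _ => And.imp_right And.left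
  | c22 => exact ((e.leadsTo_c3_of_c22 hfair _).trans (e.leadsTo_c2_of_c3 hfair _) n
      ⟨hc, rfl⟩).imp fun _ => And.imp_right And.left
  | c3 => exact (e.leadsTo_c2_of_c3 hfair _ n ⟨hc, rfl⟩).imp fun _ => And.imp_right And.left

open Fin.NatCast in
theorem leadsTo_c2_p_eq (hfair : e.Fair) (i : Fin N) :
    LeadsTo e.states (fun s => s.cpc = .c2) (fun s => s.cpc = .c2 ∧ s.p = i) := by
  have hcount (k : ℕ) : LeadsTo e.states (fun s => s.cpc = .c2 ∧ s.p = i - (k : Fin N))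
      (fun s => s.cpc = .c2 ∧ s.p = i) := by
    induction k with
    | zero => exact .of_imp fun _ h => by simpa using h
    | succ k ih =>
      refine (e.leadsTo_c2_succ hfair _).trans (.of_imp fun _ h => ?_) |>.trans ih
      rw [h.2]
      exact ⟨h.1, by push_cast; abel⟩
  intro n hn
  exact hcount (i - (e.states n).p).val n ⟨hn, by rw [Fin.cast_val_eq_self, sub_sub_cancel]⟩

theorem leadsTo_c21_of_c2_waiting (hfair : e.Fair) :
    LeadsTo e.states (fun s => s.cpc = .c2 ∧ s.p = i ∧ s.pc i = .s2)
      (fun s => s.cpc = .c21 ∧ s.p = i ∧ s.pc i = .s2) := by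
  refine e.leadsTo_of_fair_coord hfair (fun _ _ _ hs hP h => ?_) (fun s hs hP => ?_)
    fun _ _ hs hP h => ?_
  · rw [h.cpc_eq, h.p_eq]
    exact ⟨hP.1, hP.2.1, hs.pc_eq_s2_of_step (by simp [hP.1]) hP.2.2 h⟩
  · refine ⟨_, .c2_21 s hP.1 ?_⟩
    rw [hP.2.1, hs.flag_eq_waiting_iff]
    exact .inl hP.2.2
  · have := (hs.flag_eq_waiting_iff i).2 (.inl hP.2.2)
    cases h <;> simp_all

theorem leadsTo_turn_of_c21_waiting (hfair : e.Fair) :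
    LeadsTo e.states (fun s => s.cpc = .c21 ∧ s.p = i ∧ s.pc i = .s2)
      (fun s => s.turn = some i ∧ s.pc i = .s2) := by
  refine e.leadsTo_of_fair_coord hfair (fun _ _ _ hs hP h => ?_)
    (fun s _ hP => ⟨_, .c21_22 s hP.1⟩) fun _ _ _ hP h => by cases h <;> simp_all
  rw [h.cpc_eq, h.p_eq]
  exact ⟨hP.1, hP.2.1, hs.pc_eq_s2_of_step (by simp [hP.1]) hP.2.2 h⟩

theorem leadsTo_cs_of_c2_waiting (hfair : e.Fair) :
    LeadsTo e.states (fun s => s.cpc = .c2 ∧ s.p = i ∧ s.pc i = .s2) (fun s => s.pc i = .cs) :=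
  (e.leadsTo_c21_of_c2_waiting hfair).trans <| (e.leadsTo_turn_of_c21_waiting hfair).trans <|
    (e.leadsTo_cs_of_turn hfair).trans (.of_imp fun _ => And.right)

end Exec

end Asym

open Asym in
/-- **Progress for the asymmetric algorithm.**
In every fair execution, every process that is waiting in state 2 (having
set `flag[i] := WAITING`) eventually enters the critical section. -/
theorem asym_progress {N : ℕ} [NeZero N] (e : Exec N) (hfair : e.Fair)
    (n : ℕ) (i : Fin N) (hi : (e.states n).pc i = PPC.s2) :
    ∃ m, n ≤ m ∧ (e.states m).pc i = PPC.cs := by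
  rcases e.exists_or_forall_of_unless (fun _ _ _ _ hi h => (h.pc_of_pc_eq_s2 hi).imp_right And.left)
    n hi with hcs | hwait
  · exact hcs
  obtain ⟨m, hnm, hm⟩ := ((e.leadsTo_c2 hfair).trans (e.leadsTo_c2_p_eq hfair i)) n trivial
  obtain ⟨k, hmk, hk⟩ := e.leadsTo_cs_of_c2_waiting hfair m ⟨hm.1, hm.2, hwait m hnm⟩
  exact ⟨k, hnm.trans hmk, hk⟩
end

section
/- Progress for the one-writer asymmetric algorithm: in every fair execution of the one-writer asymmetric algorithm, every process that is waiting in state 2 (having set flag[i]:=WAITING) eventually enters the critical section. -/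
/-!
Model of the asymmetric mutual-exclusion algorithm using only
one-writer/multiple-reader shared variables: `turn` is writable only by the
coordinator.

Process `i` automaton: state 1 --(flag[i]:=WAITING)--> state 2
--(turn = i ⇒)--> critical section --(flag[i]:=REMAINDER)--> state 3
--(turn ≠ i ⇒)--> state 4.

Coordinator automaton (local counter `p`, initially set to 0):
state 1 --(p:=0)--> state 2; state 2 --(flag[p]≠WAITING ⇒)--> state 3;
state 2 --(flag[p]=WAITING ⇒)--> state 2.1 --(turn:=p)--> state 2.2
--(flag[p]=REMAINDER ⇒ turn:=THINKING)--> state 3;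
state 3 --(p:=(p+1) mod N)--> state 2.
-/

namespace Asym1W

inductive Flag
  | remainder | waiting
  deriving DecidableEq

/-- Program counter of a process. -/
inductive PPC
  | s1 | s2 | cs | s3 | s4
  deriving DecidableEq

/-- Program counter of the coordinator. -/
inductive CPC
  | c1 | c2 | c21 | c22 | c3
  deriving DecidableEq

/-- A global state. -/
structure St (N : ℕ) where
  /-- `none` encodes THINKING. -/
  turn : Option (Fin N)
  flag : Fin N → Flag
  pc : Fin N → PPC
  cpc : CPC
  p : Fin N

/-- The initial global state. -/
def initSt (N : ℕ) [NeZero N] : St N where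
  turn := none
  flag := fun _ => .remainder
  pc := fun _ => .s1
  cpc := .c1
  p := 0

/-- Who takes a step: a process or the coordinator. -/
inductive Label (N : ℕ)
  | proc : Fin N → Label N
  | coord

/-- One enabled transition of a single agent. -/
inductive Step {N : ℕ} [NeZero N] : Label N → St N → St N → Prop
  | p12 (s : St N) (i : Fin N) (h : s.pc i = .s1) :
      Step (.proc i) s { s with flag := Function.update s.flag i .waiting,
                                pc := Function.update s.pc i .s2 }
  | p2cs (s : St N) (i : Fin N) (h : s.pc i = .s2) (ht : s.turn = some i) :
      Step (.proc i) s { s with pc := Function.update s.pc i .cs }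
  | pcs3 (s : St N) (i : Fin N) (h : s.pc i = .cs) :
      Step (.proc i) s { s with flag := Function.update s.flag i .remainder,
                                pc := Function.update s.pc i .s3 }
  | p34 (s : St N) (i : Fin N) (h : s.pc i = .s3) (ht : s.turn ≠ some i) :
      Step (.proc i) s { s with pc := Function.update s.pc i .s4 }
  | c12 (s : St N) (h : s.cpc = .c1) :
      Step .coord s { s with p := 0, cpc := .c2 }
  | c23 (s : St N) (h : s.cpc = .c2) (hf : s.flag s.p ≠ .waiting) :
      Step .coord s { s with cpc := .c3 }
  | c2_21 (s : St N) (h : s.cpc = .c2) (hf : s.flag s.p = .waiting) :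
      Step .coord s { s with cpc := .c21 }
  | c21_22 (s : St N) (h : s.cpc = .c21) :
      Step .coord s { s with turn := some s.p, cpc := .c22 }
  | c22_3 (s : St N) (h : s.cpc = .c22) (hf : s.flag s.p = .remainder) :
      Step .coord s { s with turn := none, cpc := .c3 }
  | c3_2 (s : St N) (h : s.cpc = .c3) :
      Step .coord s { s with p := s.p + 1, cpc := .c2 }

/-- An execution: a sequence of global states starting from the initial
state, together with a schedule; at each instant either exactly one agent
takes one of its enabled transitions, or (if `none` is scheduled) the
state stutters. -/
structure Exec (N : ℕ) [NeZero N] where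
  states : ℕ → St N
  sched : ℕ → Option (Label N)
  init : states 0 = initSt N
  step : ∀ n, match sched n with
    | some l => Step l (states n) (states (n + 1))
    | none => states (n + 1) = states n

/-- An agent is enabled if it can take a transition. -/
def Enabled {N : ℕ} [NeZero N] (l : Label N) (s : St N) : Prop :=
  ∃ s', Step l s s'

/-- Weak fairness: an agent whose next transition is continuously enabled
eventually takes it. -/
def Exec.Fair {N : ℕ} [NeZero N] (e : Exec N) : Prop :=
  ∀ l n, (∀ m, n ≤ m → Enabled l (e.states m)) → ∃ m, n ≤ m ∧ e.sched m = some l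

/-- A state is reachable if it occurs in some execution. -/
def Reachable {N : ℕ} [NeZero N] (s : St N) : Prop :=
  ∃ e : Exec N, ∃ n, e.states n = s

end Asym1W

/-!
Suppose `p_i` waits in state 2 but never enters the critical section; then it stays in state 2,
so `flag[i] = WAITING` forever. The coordinator is never blocked for good: at 2.2 with counter
`q`, the invariant gives `turn = q`, so by fairness `p_q` passes through its critical section and
resets `flag[q]`, after which the coordinator moves on. Hence it cycles through all counters,
reads `flag[i] = WAITING` and sets `turn := i`; from then on it is blocked at 2.2 and `p_i` is
continuously enabled, so fairness makes it enter the critical section. Each liveness step is an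
instance of Lamport's rule WF1, relative to the invariant of reachable states (`flag[j] = WAITING`
iff `p_j` is in state 2 or in the critical section, and `turn = p` at 2.2).
-/

namespace Asym1W

variable {N : ℕ} [NeZero N]

namespace Step

variable {s s' : St N} {j k : Fin N}

lemma coord_pc (h : Step .coord s s') : s'.pc = s.pc := by
  cases h <;> rfl

lemma proc_cpc (h : Step (.proc j) s s') : s'.cpc = s.cpc := by
  cases h <;> rfl

lemma proc_p (h : Step (.proc j) s s') : s'.p = s.p := by
  cases h <;> rfl

lemma proc_pc_of_ne (h : Step (.proc j) s s') (hk : k ≠ j) : s'.pc k = s.pc k := by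
  cases h <;> simp [Function.update_of_ne hk]

lemma proc_pc_of_s2 (h : Step (.proc j) s s') (hj : s.pc j = .s2) : s'.pc j = .cs := by
  cases h <;> simp_all

lemma proc_pc_of_cs (h : Step (.proc j) s s') (hj : s.pc j = .cs) : s'.pc j = .s3 := by
  cases h <;> simp_all

lemma proc_pc_of_s3_or_s4 (h : Step (.proc j) s s') (hj : s.pc j = .s3 ∨ s.pc j = .s4) :
    s'.pc j = .s4 := by
  cases h <;> simp_all

lemma pc_of_s2 {l : Label N} (h : Step l s s') (hk : s.pc k = .s2) :
    s'.pc k = .s2 ∨ s'.pc k = .cs := by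
  cases l with
  | coord => exact .inl (h.coord_pc ▸ hk)
  | proc j =>
    rcases eq_or_ne k j with rfl | hkj
    · exact .inr (h.proc_pc_of_s2 hk)
    · exact .inl (h.proc_pc_of_ne hkj ▸ hk)

lemma coord_of_c1 (h : Step .coord s s') (hc : s.cpc = .c1) : s'.cpc = .c2 ∧ s'.p = 0 := by
  cases h <;> simp_all

lemma coord_of_c2 (h : Step .coord s s') (hc : s.cpc = .c2) :
    s'.cpc = .c21 ∧ s'.p = s.p ∨ s'.cpc = .c3 ∧ s'.p = s.p ∧ s'.flag s.p = .remainder := by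
  cases h with
  | c23 _ _ hflag => cases hfp : s.flag s.p <;> simp_all
  | _ => simp_all

lemma coord_of_c21 (h : Step .coord s s') (hc : s.cpc = .c21) :
    s'.cpc = .c22 ∧ s'.p = s.p := by
  cases h <;> simp_all

lemma coord_of_c22 (h : Step .coord s s') (hc : s.cpc = .c22) :
    s.flag s.p = .remainder ∧ s'.cpc = .c3 ∧ s'.p = s.p := by
  cases h <;> simp_all

lemma coord_of_c3 (h : Step .coord s s') (hc : s.cpc = .c3) :
    s'.cpc = .c2 ∧ s'.p = s.p + 1 := by
  cases h <;> simp_all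

end Step

lemma enabled_coord_of_ne_c22 {s : St N} (hc : s.cpc ≠ .c22) : Enabled .coord s := by
  rcases hs : s.cpc
  · exact ⟨_, .c12 s hs⟩
  · by_cases hflag : s.flag s.p = .waiting
    · exact ⟨_, .c2_21 s hs hflag⟩
    · exact ⟨_, .c23 s hs hflag⟩
  · exact ⟨_, .c21_22 s hs⟩
  · exact absurd hs hc
  · exact ⟨_, .c3_2 s hs⟩

namespace Exec

variable {e : Exec N}

lemma step_or_eq (e : Exec N) (m : ℕ) :
    e.states (m + 1) = e.states m ∨
      ∃ l, e.sched m = some l ∧ Step l (e.states m) (e.states (m + 1)) := by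
  have h := e.step m
  cases hsched : e.sched m <;> simp_all

lemma reachable_states (e : Exec N) (m : ℕ) : Reachable (e.states m) := ⟨e, m, rfl⟩

lemma forall_of_unless (e : Exec N) {P Q : St N → Prop}
    (hPQ : ∀ l s s', Reachable s → P s → Step l s s' → P s' ∨ Q s') {n : ℕ}
    (hn : P (e.states n)) (hQ : ∀ m, n ≤ m → ¬Q (e.states m)) :
    ∀ m, n ≤ m → P (e.states m) := by
  intro m hm
  induction m, hm using Nat.le_induction with
  | base => exact hn
  | succ m hm ih =>
    rcases e.step_or_eq m with heq | ⟨l, -, h⟩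
    · exact heq ▸ ih
    · exact (hPQ l _ _ (e.reachable_states m) ih h).resolve_right (hQ _ (by omega))

def LeadsTo (e : Exec N) (P Q : St N → Prop) : Prop :=
  ∀ m, P (e.states m) → ∃ t, m ≤ t ∧ Q (e.states t)

lemma LeadsTo.refl (P : St N → Prop) : e.LeadsTo P P := fun m h => ⟨m, le_rfl, h⟩

lemma LeadsTo.trans {P Q R : St N → Prop} (h₁ : e.LeadsTo P Q) (h₂ : e.LeadsTo Q R) :
    e.LeadsTo P R := fun m hm =>
  let ⟨t, hmt, ht⟩ := h₁ m hm
  let ⟨u, htu, hu⟩ := h₂ t ht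
  ⟨u, hmt.trans htu, hu⟩

/-- Lamport's rule WF1. -/
lemma Fair.leadsTo (hf : e.Fair) (l : Label N) {P Q : St N → Prop}
    (hstable : ∀ l' s s', l' ≠ l → Reachable s → P s → Step l' s s' → P s' ∨ Q s')
    (hstep : ∀ s s', Reachable s → P s → Step l s s' → Q s')
    (henabled : ∀ s, Reachable s → P s → Enabled l s) :
    e.LeadsTo P Q := by
  intro n hn
  by_contra! hQ
  have hP := e.forall_of_unless (P := P) (Q := Q) (fun l' s s' hs hPs h => by
    rcases eq_or_ne l' l with rfl | hl
    · exact .inr (hstep s s' hs hPs h)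
    · exact hstable l' s s' hl hs hPs h) hn hQ
  obtain ⟨m, hm, hsched⟩ := hf l n fun m hm => henabled _ (e.reachable_states m) (hP m hm)
  have h := e.step m
  rw [hsched] at h
  exact hQ (m + 1) (by omega) (hstep _ _ (e.reachable_states m) (hP m hm) h)

end Exec

structure Inv (s : St N) : Prop where
  flag_eq_waiting_iff : ∀ j, s.flag j = .waiting ↔ s.pc j = .s2 ∨ s.pc j = .cs
  turn_of_c22 : s.cpc = .c22 → s.turn = some s.p
  pc_ne_s1 : s.cpc = .c21 ∨ s.cpc = .c22 → s.pc s.p ≠ .s1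

lemma inv_initSt : Inv (initSt N) where
  flag_eq_waiting_iff _ := by simp [initSt]
  turn_of_c22 := by simp [initSt]
  pc_ne_s1 := by simp [initSt]

lemma Inv.step {l : Label N} {s s' : St N} (hs : Inv s) (h : Step l s s') : Inv s' := by
  obtain ⟨hflag, hc22, hs1⟩ := hs
  cases h <;> constructor <;> intros <;> simp_all [Function.update_apply] <;> grind

lemma Reachable.inv {s : St N} (hs : Reachable s) : Inv s := by
  obtain ⟨e, m, rfl⟩ := hs
  induction m with
  | zero => exact e.init ▸ inv_initSt
  | succ m ih =>
    rcases e.step_or_eq m with heq | ⟨l, -, h⟩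
    · exact heq ▸ ih
    · exact ih.step h

/-- The coordinator is blocked at `c22` because `flag q = waiting`. -/
lemma Reachable.step_of_c22_of_waiting {s s' : St N} {q : Fin N} {l : Label N} (hs : Reachable s)
    (hl : l ≠ .proc q) (hc : s.cpc = .c22) (hp : s.p = q) (hq : s.pc q = .s2 ∨ s.pc q = .cs)
    (h : Step l s s') : s'.cpc = .c22 ∧ s'.p = q ∧ s'.pc q = s.pc q := by
  cases l with
  | coord =>
    have hflag := (hs.inv.flag_eq_waiting_iff q).mpr hq
    subst hp
    simp [(h.coord_of_c22 hc).1] at hflag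
  | proc j =>
    have hqj : q ≠ j := fun hqj => hl (hqj ▸ rfl)
    exact ⟨h.proc_cpc ▸ hc, h.proc_p ▸ hp, h.proc_pc_of_ne hqj⟩

namespace Exec

variable {e : Exec N}

lemma Fair.leadsTo_coord (hf : e.Fair) {c : CPC} (hc : c ≠ .c22) (q : Fin N) {Q : St N → Prop}
    (hstep : ∀ s s', s.cpc = c → s.p = q → Step .coord s s' → Q s') :
    e.LeadsTo (fun s => s.cpc = c ∧ s.p = q) Q :=
  hf.leadsTo .coord
    (fun l' s s' hl _ hP h => by
      cases l' with
      | coord => exact absurd rfl hl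
      | proc j => exact .inl ⟨h.proc_cpc ▸ hP.1, h.proc_p ▸ hP.2⟩)
    (fun s s' _ hP h => hstep s s' hP.1 hP.2 h)
    (fun _ _ hP => enabled_coord_of_ne_c22 (hP.1 ▸ hc))

lemma Fair.leadsTo_of_c1 (hf : e.Fair) (q : Fin N) :
    e.LeadsTo (fun s => s.cpc = .c1 ∧ s.p = q) (fun s => s.cpc = .c2 ∧ s.p = 0) :=
  hf.leadsTo_coord (by decide) q fun _ _ hc _ h => h.coord_of_c1 hc

lemma Fair.leadsTo_of_c2 (hf : e.Fair) (q : Fin N) :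
    e.LeadsTo (fun s => s.cpc = .c2 ∧ s.p = q)
      (fun s => s.cpc = .c21 ∧ s.p = q ∨ s.cpc = .c3 ∧ s.p = q ∧ s.flag q = .remainder) :=
  hf.leadsTo_coord (by decide) q fun _ _ hc hp h => hp ▸ h.coord_of_c2 hc

lemma Fair.leadsTo_of_c21 (hf : e.Fair) (q : Fin N) :
    e.LeadsTo (fun s => s.cpc = .c21 ∧ s.p = q) (fun s => s.cpc = .c22 ∧ s.p = q) :=
  hf.leadsTo_coord (by decide) q fun _ _ hc hp h => hp ▸ h.coord_of_c21 hc

lemma Fair.leadsTo_of_c3 (hf : e.Fair) (q : Fin N) :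
    e.LeadsTo (fun s => s.cpc = .c3 ∧ s.p = q) (fun s => s.cpc = .c2 ∧ s.p = q + 1) :=
  hf.leadsTo_coord (by decide) q fun _ _ hc hp h => hp ▸ h.coord_of_c3 hc

lemma Fair.leadsTo_cs_of_c22_s2 (hf : e.Fair) (q : Fin N) :
    e.LeadsTo (fun s => s.cpc = .c22 ∧ s.p = q ∧ s.pc q = .s2)
      (fun s => s.cpc = .c22 ∧ s.p = q ∧ s.pc q = .cs) :=
  hf.leadsTo (.proc q)
    (fun _ _ _ hl hs ⟨hc, hp, hq⟩ h =>
      .inl (hq ▸ hs.step_of_c22_of_waiting hl hc hp (.inl hq) h))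
    (fun _ _ _ ⟨hc, hp, hq⟩ h => ⟨h.proc_cpc ▸ hc, h.proc_p ▸ hp, h.proc_pc_of_s2 hq⟩)
    (fun s hs ⟨hc, hp, hq⟩ => ⟨_, .p2cs s q hq (hp ▸ hs.inv.turn_of_c22 hc)⟩)

lemma Fair.leadsTo_past_cs_of_c22_cs (hf : e.Fair) (q : Fin N) :
    e.LeadsTo (fun s => s.cpc = .c22 ∧ s.p = q ∧ s.pc q = .cs)
      (fun s => s.cpc = .c22 ∧ s.p = q ∧ (s.pc q = .s3 ∨ s.pc q = .s4)) :=
  hf.leadsTo (.proc q)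
    (fun _ _ _ hl hs ⟨hc, hp, hq⟩ h =>
      .inl (hq ▸ hs.step_of_c22_of_waiting hl hc hp (.inr hq) h))
    (fun _ _ _ ⟨hc, hp, hq⟩ h => ⟨h.proc_cpc ▸ hc, h.proc_p ▸ hp, .inl (h.proc_pc_of_cs hq)⟩)
    (fun s _ ⟨_, _, hq⟩ => ⟨_, .pcs3 s q hq⟩)

lemma Fair.leadsTo_c3_of_c22_past_cs (hf : e.Fair) (q : Fin N) :
    e.LeadsTo (fun s => s.cpc = .c22 ∧ s.p = q ∧ (s.pc q = .s3 ∨ s.pc q = .s4))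
      (fun s => s.cpc = .c3 ∧ s.p = q) := by
  refine hf.leadsTo .coord (fun l' s s' hl _ ⟨hc, hp, hq⟩ h => ?_)
    (fun s s' _ ⟨hc, hp, _⟩ h => hp ▸ (h.coord_of_c22 hc).2)
    (fun s hs ⟨hc, hp, hq⟩ => ⟨_, .c22_3 s hc ?_⟩)
  · cases l' with
    | coord => exact absurd rfl hl
    | proc j =>
      refine .inl ⟨h.proc_cpc ▸ hc, h.proc_p ▸ hp, ?_⟩
      rcases eq_or_ne q j with rfl | hqj
      · exact .inr (h.proc_pc_of_s3_or_s4 hq)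
      · exact h.proc_pc_of_ne hqj ▸ hq
  · subst hp
    have hflag := mt (hs.inv.flag_eq_waiting_iff s.p).mp (by rcases hq with hq | hq <;> simp [hq])
    revert hflag
    cases s.flag s.p <;> simp

lemma Fair.leadsTo_c3_of_c22 (hf : e.Fair) (q : Fin N) :
    e.LeadsTo (fun s => s.cpc = .c22 ∧ s.p = q) (fun s => s.cpc = .c3 ∧ s.p = q) := by
  have from_past_cs := hf.leadsTo_c3_of_c22_past_cs q
  have from_cs := (hf.leadsTo_past_cs_of_c22_cs q).trans from_past_cs
  have from_s2 := (hf.leadsTo_cs_of_c22_s2 q).trans from_cs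
  intro m ⟨hc, hp⟩
  rcases hq : (e.states m).pc q
  · exact absurd (hp ▸ hq) ((e.reachable_states m).inv.pc_ne_s1 (.inr hc))
  · exact from_s2 m ⟨hc, hp, hq⟩
  · exact from_cs m ⟨hc, hp, hq⟩
  · exact from_past_cs m ⟨hc, hp, .inl hq⟩
  · exact from_past_cs m ⟨hc, hp, .inr hq⟩

lemma Fair.leadsTo_c2_succ (hf : e.Fair) (q : Fin N) :
    e.LeadsTo (fun s => s.cpc = .c2 ∧ s.p = q) (fun s => s.cpc = .c2 ∧ s.p = q + 1) := by
  have from_c3 := hf.leadsTo_of_c3 q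
  have from_c21 := ((hf.leadsTo_of_c21 q).trans (hf.leadsTo_c3_of_c22 q)).trans from_c3
  refine (hf.leadsTo_of_c2 q).trans fun m hm => ?_
  rcases hm with h21 | ⟨hc3, hp, -⟩
  · exact from_c21 m h21
  · exact from_c3 m ⟨hc3, hp⟩

open Fin.NatCast in
lemma Fair.leadsTo_c2_of_c2 (hf : e.Fair) (q j : Fin N) :
    e.LeadsTo (fun s => s.cpc = .c2 ∧ s.p = q) (fun s => s.cpc = .c2 ∧ s.p = j) := by
  suffices ∀ k : ℕ, e.LeadsTo (fun s => s.cpc = .c2 ∧ s.p = q)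
      (fun s => s.cpc = .c2 ∧ s.p = q + k) by
    simpa only [Fin.cast_val_eq_self, add_sub_cancel] using this (j - q).val
  intro k
  induction k with
  | zero => simpa using LeadsTo.refl _
  | succ k ih =>
    simpa only [Nat.cast_add, Nat.cast_one, add_assoc] using ih.trans (hf.leadsTo_c2_succ _)

lemma Fair.leadsTo_c2 (hf : e.Fair) (j : Fin N) :
    e.LeadsTo (fun _ => True) (fun s => s.cpc = .c2 ∧ s.p = j) := by
  intro m _
  set q := (e.states m).p
  have from_c3 := (hf.leadsTo_of_c3 q).trans (hf.leadsTo_c2_of_c2 (q + 1) j)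
  have from_c22 := (hf.leadsTo_c3_of_c22 q).trans from_c3
  rcases hc : (e.states m).cpc
  · exact ((hf.leadsTo_of_c1 q).trans (hf.leadsTo_c2_of_c2 0 j)) m ⟨hc, rfl⟩
  · exact hf.leadsTo_c2_of_c2 q j m ⟨hc, rfl⟩
  · exact ((hf.leadsTo_of_c21 q).trans from_c22) m ⟨hc, rfl⟩
  · exact from_c22 m ⟨hc, rfl⟩
  · exact from_c3 m ⟨hc, rfl⟩

end Exec

end Asym1W

open Asym1W in
/-- **Progress for the one-writer asymmetric algorithm.**
In every fair execution, every process that is waiting in state 2 (having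
set `flag[i] := WAITING`) eventually enters the critical section. -/
theorem asym1w_progress {N : ℕ} [NeZero N] (e : Exec N) (hfair : e.Fair)
    (n : ℕ) (i : Fin N) (hi : (e.states n).pc i = PPC.s2) :
    ∃ m, n ≤ m ∧ (e.states m).pc i = PPC.cs := by
  by_contra! hnever
  have hstuck : ∀ m, n ≤ m → (e.states m).pc i = .s2 :=
    e.forall_of_unless (fun _ _ _ _ hs h => h.pc_of_s2 hs) hi hnever
  obtain ⟨t₁, hnt₁, hc2⟩ := hfair.leadsTo_c2 i n trivial
  obtain ⟨t₂, ht₁₂, h21 | ⟨-, -, hrem⟩⟩ := hfair.leadsTo_of_c2 i t₁ hc2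
  · obtain ⟨t₃, ht₂₃, hc22, hp⟩ := hfair.leadsTo_of_c21 i t₂ h21
    obtain ⟨t₄, ht₃₄, -, -, hcs⟩ :=
      hfair.leadsTo_cs_of_c22_s2 i t₃ ⟨hc22, hp, hstuck t₃ (by omega)⟩
    exact hnever t₄ (by omega) hcs
  · have hwaiting := ((e.reachable_states t₂).inv.flag_eq_waiting_iff i).mpr
      (.inl (hstuck t₂ (by omega)))
    simp [hrem] at hwaiting
end

section
/- Mutual exclusion for the symmetric algorithm: in every reachable global state, no two distinct processes have their program counters simultaneously at the critical section. -/
/-!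
Model of the symmetric mutual-exclusion algorithm (no coordinator).

Shared variables: `turn ∈ {0,…,N−1, THINKING, FREE}` (initially FREE) and
`flag : Fin N → {REMAINDER, WAITING, CANDIDATE}` (initially all REMAINDER,
`flag[i]` writable only by process `i`).

Entry automaton for process `i` (program-counter states):
* `s1`   : set `flag[i] := WAITING`, go to `s2`;
* `s2`   : wait while `turn = THINKING`; if `turn = FREE` go to `s3`
           (beginning of the candidate phase); if `turn` is a process
           identifier, go to `s4`;
* `s3`   : set `flag[i] := CANDIDATE`, go to `s32` (state 3.2);
* `s32`  : repeat-loop test: if `turn = FREE ∧ flag[i] = CANDIDATE`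
           go to `s33` (state 3.3), otherwise leave the loop to `s37`;
* `s33`  : set `nCandidates := 0`, `minCandidate := −1`, initialize the scan
           counter, go to `s34`;
* `s34`  : scan loop (states 3.4/3.4.1/3.4.2), `j` from `N−1` down to `0`:
           if the scan is over, go to `s35`; otherwise inspect `flag[j]`:
           if it is CANDIDATE go to `s341` else decrement `j`;
* `s341` : set `nCandidates := nCandidates + 1`, `minCandidate := j`,
           decrement `j`, back to `s34`;
* `s35`  : if `turn = FREE ∧ nCandidates = 1` go to `s351` (state 3.5.1),
           otherwise go to `s36`;
* `s351` : set `turn := i`, go to `s352` (state 3.5.2);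
* `s352` : go to `s36`;
* `s36`  : if `turn ≠ FREE ∨ minCandidate < i` set `flag[i] := WAITING`
           (state 3.6); in either case return to the repeat test `s32`;
* `s37`  : after the repeat ends, set `flag[i] := WAITING`, go to `s4`;
* `s4`   : wait until `turn = i`, then enter the critical section `cs`.

Exit automaton for process `i`:
* `cs`   : set `turn := THINKING`, go to `s5` (state 5);
* `s5`   : set `flag[i] := REMAINDER`, `nextTurn := THINKING`, initialize the
           scan counter, go to `s6`;
* `s6`   : loop (states 6/6.1/6.2) with `j` over `i+1,…,N−1,0,…,i−1` while
           `nextTurn = THINKING`: if `flag[j] ≠ REMAINDER` set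
           `nextTurn := j`; when the loop ends go to `s63` (state 6.3);
* `s63`  : if `nextTurn = THINKING` set `turn := FREE` else
           `turn := nextTurn`; go to `s8` (state 8).
-/

namespace Sym

/-- Values of the shared variable `turn` (and of `nextTurn`). -/
inductive Turn (N : ℕ)
  | free
  | thinking
  | id : Fin N → Turn N
  deriving DecidableEq

inductive Flag
  | remainder | waiting | candidate
  deriving DecidableEq

/-- Program counter of a process. -/
inductive PC
  | s1 | s2 | s3 | s32 | s33 | s34 | s341 | s35 | s351 | s352 | s36 | s37
  | s4 | cs | s5 | s6 | s63 | s8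
  deriving DecidableEq

/-- A global state: shared variables plus each process's program counter and
local variables (`cnt` is the loop counter `j`, reused by the candidate scan
and the exit scan). -/
structure St (N : ℕ) where
  turn : Turn N
  flag : Fin N → Flag
  pc : Fin N → PC
  nCand : Fin N → ℕ
  minCand : Fin N → ℤ
  nextTurn : Fin N → Turn N
  cnt : Fin N → ℕ

/-- The initial global state. -/
def initSt (N : ℕ) : St N where
  turn := .free
  flag := fun _ => .remainder
  pc := fun _ => .s1
  nCand := fun _ => 0
  minCand := fun _ => 0
  nextTurn := fun _ => .thinking
  cnt := fun _ => 0

/-- In the exit scan of process `i`, the index examined when the counter is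
`k` is `(i + k + 1) mod N`: the scan order is `i+1, …, N−1, 0, …, i−1`. -/
def nxt {N : ℕ} (i : Fin N) (k : ℕ) : Fin N :=
  ⟨(i.val + k + 1) % N, Nat.mod_lt _ i.pos⟩

/-- One enabled transition of process `i`. -/
inductive Step {N : ℕ} : Fin N → St N → St N → Prop
  | t1 (s : St N) (i : Fin N) (h : s.pc i = .s1) :
      Step i s { s with flag := Function.update s.flag i .waiting,
                        pc := Function.update s.pc i .s2 }
  | t2free (s : St N) (i : Fin N) (h : s.pc i = .s2) (ht : s.turn = .free) :
      Step i s { s with pc := Function.update s.pc i .s3 }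
  | t2id (s : St N) (i j : Fin N) (h : s.pc i = .s2) (ht : s.turn = .id j) :
      Step i s { s with pc := Function.update s.pc i .s4 }
  | t3 (s : St N) (i : Fin N) (h : s.pc i = .s3) :
      Step i s { s with flag := Function.update s.flag i .candidate,
                        pc := Function.update s.pc i .s32 }
  | t32enter (s : St N) (i : Fin N) (h : s.pc i = .s32)
      (ht : s.turn = .free) (hf : s.flag i = .candidate) :
      Step i s { s with pc := Function.update s.pc i .s33 }
  | t32exit (s : St N) (i : Fin N) (h : s.pc i = .s32)
      (hc : ¬ (s.turn = .free ∧ s.flag i = .candidate)) :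
      Step i s { s with pc := Function.update s.pc i .s37 }
  | t33 (s : St N) (i : Fin N) (h : s.pc i = .s33) :
      Step i s { s with nCand := Function.update s.nCand i 0,
                        minCand := Function.update s.minCand i (-1),
                        cnt := Function.update s.cnt i N,
                        pc := Function.update s.pc i .s34 }
  | t34done (s : St N) (i : Fin N) (h : s.pc i = .s34) (hc : s.cnt i = 0) :
      Step i s { s with pc := Function.update s.pc i .s35 }
  | t34cand (s : St N) (i j : Fin N) (h : s.pc i = .s34) (hc : s.cnt i ≠ 0)
      (hj : (j : ℕ) = s.cnt i - 1) (hf : s.flag j = .candidate) :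
      Step i s { s with pc := Function.update s.pc i .s341 }
  | t34nocand (s : St N) (i j : Fin N) (h : s.pc i = .s34) (hc : s.cnt i ≠ 0)
      (hj : (j : ℕ) = s.cnt i - 1) (hf : s.flag j ≠ .candidate) :
      Step i s { s with cnt := Function.update s.cnt i (s.cnt i - 1),
                        pc := Function.update s.pc i .s34 }
  | t341 (s : St N) (i : Fin N) (h : s.pc i = .s341) :
      Step i s { s with nCand := Function.update s.nCand i (s.nCand i + 1),
                        minCand := Function.update s.minCand i ((s.cnt i : ℤ) - 1),
                        cnt := Function.update s.cnt i (s.cnt i - 1),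
                        pc := Function.update s.pc i .s34 }
  | t35yes (s : St N) (i : Fin N) (h : s.pc i = .s35)
      (ht : s.turn = .free) (hn : s.nCand i = 1) :
      Step i s { s with pc := Function.update s.pc i .s351 }
  | t35no (s : St N) (i : Fin N) (h : s.pc i = .s35)
      (hc : ¬ (s.turn = .free ∧ s.nCand i = 1)) :
      Step i s { s with pc := Function.update s.pc i .s36 }
  | t351 (s : St N) (i : Fin N) (h : s.pc i = .s351) :
      Step i s { s with turn := .id i, pc := Function.update s.pc i .s352 }
  | t352 (s : St N) (i : Fin N) (h : s.pc i = .s352) :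
      Step i s { s with pc := Function.update s.pc i .s36 }
  | t36yes (s : St N) (i : Fin N) (h : s.pc i = .s36)
      (hc : s.turn ≠ .free ∨ s.minCand i < (i : ℤ)) :
      Step i s { s with flag := Function.update s.flag i .waiting,
                        pc := Function.update s.pc i .s32 }
  | t36no (s : St N) (i : Fin N) (h : s.pc i = .s36)
      (hc : ¬ (s.turn ≠ .free ∨ s.minCand i < (i : ℤ))) :
      Step i s { s with pc := Function.update s.pc i .s32 }
  | t37 (s : St N) (i : Fin N) (h : s.pc i = .s37) :
      Step i s { s with flag := Function.update s.flag i .waiting,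
                        pc := Function.update s.pc i .s4 }
  | t4 (s : St N) (i : Fin N) (h : s.pc i = .s4) (ht : s.turn = .id i) :
      Step i s { s with pc := Function.update s.pc i .cs }
  | tcs (s : St N) (i : Fin N) (h : s.pc i = .cs) :
      Step i s { s with turn := .thinking, pc := Function.update s.pc i .s5 }
  | t5 (s : St N) (i : Fin N) (h : s.pc i = .s5) :
      Step i s { s with flag := Function.update s.flag i .remainder,
                        nextTurn := Function.update s.nextTurn i .thinking,
                        cnt := Function.update s.cnt i 0,
                        pc := Function.update s.pc i .s6 }
  | t6exit (s : St N) (i : Fin N) (h : s.pc i = .s6)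
      (hc : s.nextTurn i ≠ .thinking ∨ s.cnt i = N - 1) :
      Step i s { s with pc := Function.update s.pc i .s63 }
  | t6found (s : St N) (i : Fin N) (h : s.pc i = .s6)
      (hnt : s.nextTurn i = .thinking) (hcnt : s.cnt i ≠ N - 1)
      (hf : s.flag (nxt i (s.cnt i)) ≠ .remainder) :
      Step i s { s with
        nextTurn := Function.update s.nextTurn i (.id (nxt i (s.cnt i))),
        cnt := Function.update s.cnt i (s.cnt i + 1),
        pc := Function.update s.pc i .s6 }
  | t6notfound (s : St N) (i : Fin N) (h : s.pc i = .s6)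
      (hnt : s.nextTurn i = .thinking) (hcnt : s.cnt i ≠ N - 1)
      (hf : s.flag (nxt i (s.cnt i)) = .remainder) :
      Step i s { s with cnt := Function.update s.cnt i (s.cnt i + 1),
                        pc := Function.update s.pc i .s6 }
  | t63free (s : St N) (i : Fin N) (h : s.pc i = .s63)
      (hn : s.nextTurn i = .thinking) :
      Step i s { s with turn := .free, pc := Function.update s.pc i .s8 }
  | t63id (s : St N) (i b : Fin N) (h : s.pc i = .s63)
      (hn : s.nextTurn i = .id b) :
      Step i s { s with turn := .id b, pc := Function.update s.pc i .s8 }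

/-- An execution: a sequence of global states starting from the initial
state, together with a schedule; at each instant either exactly one process
takes one of its enabled transitions, or (if `none` is scheduled) the state
stutters. -/
structure Exec (N : ℕ) where
  states : ℕ → St N
  sched : ℕ → Option (Fin N)
  init : states 0 = initSt N
  step : ∀ n, match sched n with
    | some i => Step i (states n) (states (n + 1))
    | none => states (n + 1) = states n

/-- A process is enabled if it can take a transition. -/
def Enabled {N : ℕ} (i : Fin N) (s : St N) : Prop :=
  ∃ s', Step i s s'

/-- Weak fairness: a process whose next transition is continuously enabled
eventually takes it. -/
def Exec.Fair {N : ℕ} (e : Exec N) : Prop :=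
  ∀ i n, (∀ m, n ≤ m → Enabled i (e.states m)) → ∃ m, n ≤ m ∧ e.sched m = some i

/-- A state is reachable if it occurs in some execution. -/
def Reachable {N : ℕ} (s : St N) : Prop :=
  ∃ e : Exec N, ∃ n, e.states n = s

/-- The extended critical section: program-counter states in `[CS, 8)`. -/
def ExtCS : PC → Prop := fun p => p = .cs ∨ p = .s5 ∨ p = .s6 ∨ p = .s63

/-- Program-counter states in the interval `[3, 4]`: from entering the
candidate phase up to (and including) waiting at state 4. -/
def In34 : PC → Prop := fun p =>
  p = .s3 ∨ p = .s32 ∨ p = .s33 ∨ p = .s34 ∨ p = .s341 ∨ p = .s35 ∨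
  p = .s351 ∨ p = .s352 ∨ p = .s36 ∨ p = .s37 ∨ p = .s4

/-- Position of `x` in the cyclic order `a+1, …, N−1, 0, …, a−1, a`
starting just after `a` (so `rank a (a+1) = 0` and `rank a a = N−1`). -/
def rank {N : ℕ} (a x : Fin N) : ℕ := (x.val + N - a.val - 1) % N

end Sym


/-!
The heart of the proof is the invariant `turn = i` whenever process `i` is at state 3.5.2 or in
the critical section. `turn` leaves `FREE` only at state 3.5.1, which a process reaches after
counting exactly one candidate, itself. Two processes that are both in the candidate scan and have
each read the other's flag cannot both have counted only themselves: the later of the two reads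
happened while the other process was already scanning, and a scanning process keeps its flag at
`CANDIDATE`. Hence at most one process is at 3.5.1. From there `turn` only changes hands through
the exit protocol, during which `turn = THINKING` and no second process can be exiting.
-/

namespace Sym

variable {N : ℕ}

def Scanning (q : PC) : Prop :=
  q = .s33 ∨ q = .s34 ∨ q = .s341 ∨ q = .s35 ∨ q = .s351 ∨ q = .s352

def Exiting (q : PC) : Prop := q = .s5 ∨ q = .s6 ∨ q = .s63

namespace St

/-- The candidate scan of `i` has read `flag[k]`. It reads `flag[cnt - 1]` next, except at `s341`,
where that flag has been read but not yet counted. -/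
def Scanned (s : St N) (i : Fin N) (k : ℕ) : Prop :=
  (s.pc i = .s34 ∧ s.cnt i ≤ k) ∨ (s.pc i = .s341 ∧ s.cnt i - 1 ≤ k) ∨
    s.pc i = .s35 ∨ s.pc i = .s351 ∨ s.pc i = .s352

def counted (s : St N) (i : Fin N) : ℕ := s.nCand i + if s.pc i = .s341 then 1 else 0

/-- Process `i` has counted a candidate other than itself. -/
def CountedRival (s : St N) (i : Fin N) : Prop :=
  1 ≤ s.counted i ∧ (s.Scanned i i → 2 ≤ s.counted i)

theorem scanning_of_scanned {s : St N} {i : Fin N} {k : ℕ} (h : s.Scanned i k) :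
    Scanning (s.pc i) := by
  rcases h with ⟨h, -⟩ | ⟨h, -⟩ | h | h | h <;> simp [Scanning, h]

end St

structure Inv (s : St N) : Prop where
  flag_eq_candidate : ∀ i, Scanning (s.pc i) → s.flag i = .candidate
  one_le_counted : ∀ i : Fin N, s.Scanned i i → 1 ≤ s.counted i
  nCand_eq_one : ∀ i, s.pc i = .s351 ∨ s.pc i = .s352 → s.nCand i = 1
  countedRival : ∀ i j : Fin N, i ≠ j → s.Scanned i j → s.Scanned j i →
    s.CountedRival i ∨ s.CountedRival j
  turn_eq_free : ∀ i, s.pc i = .s351 → s.turn = .free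
  turn_eq_id : ∀ i, s.pc i = .s352 ∨ s.pc i = .cs → s.turn = .id i
  turn_eq_thinking : ∀ i, Exiting (s.pc i) → s.turn = .thinking
  exiting_unique : ∀ i j, Exiting (s.pc i) → Exiting (s.pc j) → i = j

namespace Inv

variable {s : St N}

theorem init : Inv (initSt N) := by
  constructor <;> simp [Sym.initSt, Scanning, Exiting, St.Scanned]

theorem not_countedRival (H : Inv s) {i : Fin N} (hi : s.pc i = .s351) :
    ¬ s.CountedRival i := by
  rintro ⟨-, h⟩
  have := h (by simp [St.Scanned, hi])
  simp [St.counted, hi, H.nCand_eq_one i (Or.inl hi)] at this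

theorem eq_of_pc_eq_s351 (H : Inv s) {i j : Fin N} (hi : s.pc i = .s351)
    (hj : s.pc j = .s351) : i = j := by
  by_contra hij
  rcases H.countedRival i j hij (by simp [St.Scanned, hi]) (by simp [St.Scanned, hj]) with h | h
  exacts [H.not_countedRival hi h, H.not_countedRival hj h]

end Inv

namespace Step

variable {p k : Fin N} {s s' : St N}

theorem pc_of_ne (h : Step p s s') (hk : k ≠ p) : s'.pc k = s.pc k := by
  cases h <;> simp [Function.update_of_ne hk]

theorem flag_of_ne (h : Step p s s') (hk : k ≠ p) : s'.flag k = s.flag k := by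
  cases h <;> simp [Function.update_of_ne hk]

theorem scanned_iff (h : Step p s s') (hk : k ≠ p) (l : ℕ) :
    s'.Scanned k l ↔ s.Scanned k l := by
  have hcnt : s'.cnt k = s.cnt k := by cases h <;> simp [Function.update_of_ne hk]
  simp only [St.Scanned, h.pc_of_ne hk, hcnt]

theorem counted_of_ne (h : Step p s s') (hk : k ≠ p) : s'.counted k = s.counted k := by
  have hn : s'.nCand k = s.nCand k := by cases h <;> simp [Function.update_of_ne hk]
  simp only [St.counted, h.pc_of_ne hk, hn]

theorem countedRival_iff (h : Step p s s') (hk : k ≠ p) :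
    s'.CountedRival k ↔ s.CountedRival k := by
  simp only [St.CountedRival, h.scanned_iff hk, h.counted_of_ne hk]

theorem flag_eq_candidate (H : Inv s) (h : Step p s s') (hk : Scanning (s'.pc k)) :
    s'.flag k = .candidate := by
  rcases eq_or_ne k p with rfl | hkp
  · cases h <;> simp [Scanning] at hk ⊢ <;>
      first | assumption | exact H.flag_eq_candidate k (by simp [Scanning, *])
  · rw [h.flag_of_ne hkp]
    exact H.flag_eq_candidate k (h.pc_of_ne hkp ▸ hk)

theorem one_le_counted (H : Inv s) (h : Step p s s') (hk : s'.Scanned k k) :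
    1 ≤ s'.counted k := by
  rcases eq_or_ne k p with rfl | hkp
  · cases h <;> simp [St.Scanned, St.counted] at hk ⊢
    case t33 => omega
    case t34done hpc hc =>
      simpa [St.counted, hpc] using H.one_le_counted k (by simp [St.Scanned, hpc, hc])
    case t34nocand j hf hpc hc hj =>
      have hkj : (k : ℕ) ≠ j := fun e =>
        hf (Fin.ext e ▸ H.flag_eq_candidate k (by simp [Scanning, hpc]))
      simpa [St.counted, hpc] using H.one_le_counted k (Or.inl ⟨hpc, by omega⟩)
    case t35yes hn => omega
    case t351 hpc => simp [H.nCand_eq_one k (Or.inl hpc)]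
  · rw [h.counted_of_ne hkp]
    exact H.one_le_counted k ((h.scanned_iff hkp k).1 hk)

theorem nCand_eq_one (H : Inv s) (h : Step p s s') (hk : s'.pc k = .s351 ∨ s'.pc k = .s352) :
    s'.nCand k = 1 := by
  rcases eq_or_ne k p with rfl | hkp
  · cases h <;> simp at hk ⊢
    case t35yes hn => exact hn
    case t351 hpc => exact H.nCand_eq_one k (Or.inl hpc)
  · have hn : s'.nCand k = s.nCand k := by cases h <;> simp [Function.update_of_ne hkp]
    rw [hn]
    exact H.nCand_eq_one k (h.pc_of_ne hkp ▸ hk)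

theorem countedRival_of_mover (H : Inv s) (h : Step p s s') {l : Fin N} (hl : l ≠ p)
    (hpl : s'.Scanned p l) (hlp : s.Scanned l p) : s'.CountedRival p ∨ s.CountedRival l := by
  cases h <;> simp [St.Scanned] at hpl
  case t33 => omega
  case t34cand j hf hpc hc hj =>
    suffices (s.cnt p - 1 ≤ p → 1 ≤ s.nCand p) ∨ s.CountedRival l by
      refine this.imp_left fun h => ?_
      simpa [St.CountedRival, St.counted, St.Scanned] using h
    by_cases hcl : s.cnt p ≤ l
    · refine (H.countedRival p l hl.symm (Or.inl ⟨hpc, hcl⟩) hlp).imp_left fun h _ => ?_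
      simpa [St.counted, hpc] using h.1
    · -- `p` has just read the flag of `l`
      left
      intro hcp
      have hl_val : (l : ℕ) ≠ p := Fin.val_injective.ne hl
      simpa [St.counted, hpc] using H.one_le_counted p (Or.inl ⟨hpc, by omega⟩)
  case t34nocand j hf hpc hc hj =>
    have hj : ∀ k, Scanning (s.pc k) → (k : ℕ) ≠ j := fun k hk e =>
      hf (Fin.ext e ▸ H.flag_eq_candidate k hk)
    have hpj := hj p (by simp [Scanning, hpc])
    have hlj := hj l (St.scanning_of_scanned hlp)
    refine (H.countedRival p l hl.symm (Or.inl ⟨hpc, by omega⟩) hlp).imp_left fun h => ?_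
    simp only [St.CountedRival, St.counted, St.Scanned, hpc, Function.update_self, reduceCtorEq,
      if_false, true_and, false_and, or_false] at h ⊢
    omega
  case t34done hpc hc =>
    refine (H.countedRival p l hl.symm (Or.inl ⟨hpc, by omega⟩) hlp).imp_left fun h => ?_
    simpa [St.CountedRival, St.counted, St.Scanned, hpc, hc] using h
  case t341 hpc =>
    refine (H.countedRival p l hl.symm (Or.inr (Or.inl ⟨hpc, by omega⟩)) hlp).imp_left
      fun h => ?_
    simpa [St.CountedRival, St.counted, St.Scanned, hpc] using h
  case t35yes hpc _ =>
    refine (H.countedRival p l hl.symm (by simp [St.Scanned, hpc]) hlp).imp_left fun h => ?_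
    simpa [St.CountedRival, St.counted, St.Scanned, hpc] using h
  case t351 hpc =>
    refine (H.countedRival p l hl.symm (by simp [St.Scanned, hpc]) hlp).imp_left fun h => ?_
    simpa [St.CountedRival, St.counted, St.Scanned, hpc] using h

theorem countedRival (H : Inv s) (h : Step p s s') {i j : Fin N} (hij : i ≠ j)
    (hi : s'.Scanned i j) (hj : s'.Scanned j i) : s'.CountedRival i ∨ s'.CountedRival j := by
  rcases eq_or_ne i p with rfl | hip
  · exact (h.countedRival_of_mover H hij.symm hi ((h.scanned_iff hij.symm _).1 hj)).imp_right
      (h.countedRival_iff hij.symm).2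
  rcases eq_or_ne j p with rfl | hjp
  · exact (h.countedRival_of_mover H hij hj ((h.scanned_iff hij _).1 hi)).symm.imp_left
      (h.countedRival_iff hij).2
  simpa only [h.countedRival_iff hip, h.countedRival_iff hjp] using
    H.countedRival i j hij ((h.scanned_iff hip _).1 hi) ((h.scanned_iff hjp _).1 hj)

theorem turn_eq_free (H : Inv s) (h : Step p s s') (hk : s'.pc k = .s351) :
    s'.turn = .free := by
  rcases eq_or_ne k p with rfl | hkp
  · cases h <;> simp_all
  rw [h.pc_of_ne hkp] at hk
  have hk_free := H.turn_eq_free k hk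
  have hp_id := H.turn_eq_id p
  have hp_thinking := H.turn_eq_thinking p
  have hp_s351 : s.pc p ≠ .s351 := fun hp => hkp (H.eq_of_pc_eq_s351 hk hp)
  cases h <;> simp_all [Exiting]

theorem turn_eq_id (H : Inv s) (h : Step p s s') (hk : s'.pc k = .s352 ∨ s'.pc k = .cs) :
    s'.turn = .id k := by
  rcases eq_or_ne k p with rfl | hkp
  · cases h <;> simp_all
  rw [h.pc_of_ne hkp] at hk
  have hk_id := H.turn_eq_id k hk
  have hp_free := H.turn_eq_free p
  have hp_id := H.turn_eq_id p
  have hp_thinking := H.turn_eq_thinking p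
  cases h <;> simp_all [Exiting]

theorem turn_eq_thinking (H : Inv s) (h : Step p s s') (hk : Exiting (s'.pc k)) :
    s'.turn = .thinking := by
  have hp_thinking := H.turn_eq_thinking p
  rcases eq_or_ne k p with rfl | hkp
  · cases h <;> simp_all [Exiting]
  rw [h.pc_of_ne hkp] at hk
  have hk_thinking := H.turn_eq_thinking k hk
  have hp_free := H.turn_eq_free p
  have hp_exiting : ¬ Exiting (s.pc p) := fun hp => hkp (H.exiting_unique k p hk hp)
  cases h <;> simp_all [Exiting]

theorem not_exiting_of_ne (H : Inv s) (h : Step p s s') (hk : Exiting (s'.pc k)) (hkp : k ≠ p) :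
    ¬ Exiting (s'.pc p) := by
  rw [h.pc_of_ne hkp] at hk
  have hk_thinking := H.turn_eq_thinking k hk
  have hp_id := H.turn_eq_id p
  have hp_exiting : ¬ Exiting (s.pc p) := fun hp => hkp (H.exiting_unique k p hk hp)
  cases h <;> simp_all [Exiting]

theorem exiting_unique (H : Inv s) (h : Step p s s') {i j : Fin N} (hi : Exiting (s'.pc i))
    (hj : Exiting (s'.pc j)) : i = j := by
  by_contra hij
  rcases eq_or_ne i p with rfl | hip
  · exact h.not_exiting_of_ne H hj (Ne.symm hij) hi
  rcases eq_or_ne j p with rfl | hjp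
  · exact h.not_exiting_of_ne H hi hij hj
  exact hij (H.exiting_unique i j (h.pc_of_ne hip ▸ hi) (h.pc_of_ne hjp ▸ hj))

end Step

theorem Inv.step {p : Fin N} {s s' : St N} (H : Inv s) (h : Step p s s') : Inv s' where
  flag_eq_candidate _ := h.flag_eq_candidate H
  one_le_counted _ := h.one_le_counted H
  nCand_eq_one _ := h.nCand_eq_one H
  countedRival _ _ := h.countedRival H
  turn_eq_free _ := h.turn_eq_free H
  turn_eq_id _ := h.turn_eq_id H
  turn_eq_thinking _ := h.turn_eq_thinking H
  exiting_unique _ _ := h.exiting_unique H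

theorem Reachable.inv {s : St N} (hs : Reachable s) : Inv s := by
  obtain ⟨e, n, rfl⟩ := hs
  induction n with
  | zero => exact e.init ▸ Inv.init
  | succ n ih =>
    have hstep := e.step n
    rcases hsched : e.sched n with _ | i <;> rw [hsched] at hstep
    · exact hstep ▸ ih
    · exact ih.step hstep

end Sym

open Sym in
/-- **Mutual exclusion for the symmetric algorithm.**
In every reachable global state, no two distinct processes have their
program counters simultaneously at the critical section. -/
theorem sym_mutual_exclusion {N : ℕ} (s : St N) (hs : Reachable s)
    (i j : Fin N) (hi : s.pc i = PC.cs) (hj : s.pc j = PC.cs) : i = j := by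
  have hturn_i := hs.inv.turn_eq_id i (Or.inr hi)
  have hturn_j := hs.inv.turn_eq_id j (Or.inr hj)
  exact Turn.id.inj (hturn_i.symm.trans hturn_j)
end
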